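/- Let $t_x,t_y,t_2$ be nonzero real numbers and for $k=(k_x,k_y)\in\mathbb{R}^2$ define the $4\times4$ Hermitian Bloch matrix $H(k) = t_x[(1-\cos k_x)\,\sigma_0\otimes\tau_x + \sin k_x\,\sigma_0\otimes\tau_y] + 2t_y\cos k_y\,\sigma_0\otimes\tau_z + t_2[-(\sin k_y + \sin(k_x+k_y))\,\sigma_z\otimes\tau_x + (\cos k_y - \cos(k_x+k_y))\,\sigma_z\otimes\tau_y]$. Then $H(k)$ is invertible for every $k\in\mathbb{R}^2$; equivalently, $0$ is never an eigenvalue of $H(k)$, so the half-filled $\pi$-flux model with spin-orbit coupling $t_2\neq0$ has a full energy gap. -/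
import Mathlib


open Matrix Kronecker

/-- Identity on the spin index. -/
def sigma0 : Matrix (Fin 2) (Fin 2) ℂ := 1
/-- The Pauli matrix `σ_z` on the spin index. -/
def sigmaZ : Matrix (Fin 2) (Fin 2) ℂ := !![1, 0; 0, -1]
/-- The Pauli matrix `τ_x` on the sublattice index. -/
def tauX : Matrix (Fin 2) (Fin 2) ℂ := !![0, 1; 1, 0]
/-- The Pauli matrix `τ_y` on the sublattice index. -/
def tauY : Matrix (Fin 2) (Fin 2) ℂ := !![0, -Complex.I; Complex.I, 0]
/-- The Pauli matrix `τ_z` on the sublattice index. -/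
def tauZ : Matrix (Fin 2) (Fin 2) ℂ := !![1, 0; 0, -1]

/-- The `4×4` Bloch Hamiltonian of the square-lattice `π`-flux model in the
doubled magnetic unit cell, with nearest-neighbor hoppings `t_x, t_y` and
next-nearest-neighbor spin-orbit coupling `t_2`. -/
noncomputable def blochH (tx ty t2 : ℝ) (k : ℝ × ℝ) :
    Matrix (Fin 2 × Fin 2) (Fin 2 × Fin 2) ℂ :=
  ((tx * (1 - Real.cos k.1) : ℝ) : ℂ) • (sigma0 ⊗ₖ tauX) +
    ((tx * Real.sin k.1 : ℝ) : ℂ) • (sigma0 ⊗ₖ tauY) +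
    ((2 * ty * Real.cos k.2 : ℝ) : ℂ) • (sigma0 ⊗ₖ tauZ) +
    ((-(t2 * (Real.sin k.2 + Real.sin (k.1 + k.2))) : ℝ) : ℂ) • (sigmaZ ⊗ₖ tauX) +
    ((t2 * (Real.cos k.2 - Real.cos (k.1 + k.2)) : ℝ) : ℂ) • (sigmaZ ⊗ₖ tauY)


def prodEquiv : Fin 4 ≃ Fin 2 × Fin 2 where
  toFun := ![(0, 0), (0, 1), (1, 0), (1, 1)]
  invFun p := ![![0, 1], ![2, 3]] p.1 p.2
  left_inv := by decide
  right_inv := by decide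

lemma blochH_submatrix (tx ty t2 : ℝ) (k : ℝ × ℝ) (A1 B1 A2 B2 C : ℝ)
    (hA1 : A1 = tx * (1 - Real.cos k.1) - t2 * (Real.sin k.2 + Real.sin (k.1 + k.2)))
    (hB1 : B1 = tx * Real.sin k.1 + t2 * (Real.cos k.2 - Real.cos (k.1 + k.2)))
    (hA2 : A2 = tx * (1 - Real.cos k.1) + t2 * (Real.sin k.2 + Real.sin (k.1 + k.2)))
    (hB2 : B2 = tx * Real.sin k.1 - t2 * (Real.cos k.2 - Real.cos (k.1 + k.2)))
    (hC : C = 2 * ty * Real.cos k.2) :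
    (blochH tx ty t2 k).submatrix prodEquiv prodEquiv =
    !![(C : ℂ), (A1 : ℂ) - Complex.I * (B1 : ℂ), 0, 0;
       (A1 : ℂ) + Complex.I * (B1 : ℂ), -(C : ℂ), 0, 0;
       0, 0, (C : ℂ), (A2 : ℂ) - Complex.I * (B2 : ℂ);
       0, 0, (A2 : ℂ) + Complex.I * (B2 : ℂ), -(C : ℂ)] := by
  subst hA1 hB1 hA2 hB2 hC
  ext i j
  fin_cases i <;> fin_cases j <;>
    simp [blochH, sigma0, sigmaZ, tauX, tauY, tauZ, prodEquiv,
      Matrix.add_apply, Matrix.smul_apply, Matrix.kroneckerMap_apply, Matrix.one_apply,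
      Matrix.submatrix_apply, Matrix.vecHead, Matrix.vecTail] <;>
    ring

lemma det_block (A B C : ℂ) :
    (!![C, A - Complex.I * B; A + Complex.I * B, -C]).det = -(C ^ 2 + A ^ 2 + B ^ 2) := by
  rw [Matrix.det_fin_two_of]
  linear_combination (B ^ 2) * Complex.I_sq

lemma key (tx ty t2 s cx sx cy sy cxy sxy : ℝ)
    (htx : tx ≠ 0) (hty : ty ≠ 0) (ht2 : t2 ≠ 0) (hs : s ^ 2 = 1)
    (hx : cx ^ 2 + sx ^ 2 = 1) (hy : cy ^ 2 + sy ^ 2 = 1)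
    (hcxy : cxy = cx * cy - sx * sy) (hsxy : sxy = sx * cy + cx * sy) :
    (tx * (1 - cx) - s * (t2 * (sy + sxy))) ^ 2
      + (tx * sx + s * (t2 * (cy - cxy))) ^ 2 + (2 * ty * cy) ^ 2 ≠ 0 := by
  subst hcxy hsxy
  intro h
  have sqA := sq_nonneg (tx * (1 - cx) - s * (t2 * (sy + (sx * cy + cx * sy))))
  have sqB := sq_nonneg (tx * sx + s * (t2 * (cy - (cx * cy - sx * sy))))
  have sqC := sq_nonneg (2 * ty * cy)
  have hC2 : (2 * ty * cy) ^ 2 = 0 := by linarith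
  have hcy : cy = 0 := by
    have h0 := pow_eq_zero_iff (n := 2) (by norm_num) |>.mp hC2
    have : ty * cy = 0 := by linarith
    rcases mul_eq_zero.mp this with h' | h'
    · exact absurd h' hty
    · exact h'
  subst hcy
  have hsy : sy ^ 2 = 1 := by linarith
  have hA : tx * (1 - cx) - s * t2 * sy * (1 + cx) = 0 := by
    have : (tx * (1 - cx) - s * (t2 * (sy + (sx * 0 + cx * sy)))) ^ 2 = 0 := by linarith
    have := pow_eq_zero_iff (n := 2) (by norm_num) |>.mp this
    linear_combination this
  have hB : sx * (tx + s * t2 * sy) = 0 := by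
    have : (tx * sx + s * (t2 * (0 - (cx * 0 - sx * sy)))) ^ 2 = 0 := by linarith
    have := pow_eq_zero_iff (n := 2) (by norm_num) |>.mp this
    linear_combination this
  have hst : s * t2 * sy * sx = 0 := by
    linear_combination ((1 - cx) / 2) * hB - (sx / 2) * hA
  have hsx : sx = 0 := by
    have h1 : t2 * sx * (s ^ 2 * sy ^ 2) = 0 := by linear_combination (s * sy) * hst
    rw [hs, hsy] at h1
    have : t2 * sx = 0 := by linarith
    rcases mul_eq_zero.mp this with h' | h'
    · exact absurd h' ht2
    · exact h'
  subst hsx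
  have hcx : (cx - 1) * (cx + 1) = 0 := by linear_combination hx
  rcases mul_eq_zero.mp hcx with h' | h'
  · have hcx1 : cx = 1 := by linarith
    subst hcx1
    have h0 : s * t2 * sy = 0 := by linear_combination (-1 / 2 : ℝ) * hA
    have h1 : t2 ^ 2 = 0 := by
      have : (s * t2 * sy) ^ 2 = 0 := by rw [h0]; ring
      linear_combination this - (t2 ^ 2 * sy ^ 2) * hs - t2 ^ 2 * hsy
    exact ht2 (pow_eq_zero_iff (n := 2) (by norm_num) |>.mp h1)
  · have hcx1 : cx = -1 := by linarith
    subst hcx1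
    have : tx = 0 := by linear_combination (1 / 2 : ℝ) * hA
    exact htx this

/-- For nonzero `t_x, t_y, t_2`, the Bloch matrix `H(k)` of the `π`-flux model
is invertible for every `k`; equivalently `0` is never an eigenvalue, so the
half-filled model with spin-orbit coupling has a full energy gap. -/
theorem blochH_gapped (tx ty t2 : ℝ)
    (htx : tx ≠ 0) (hty : ty ≠ 0) (ht2 : t2 ≠ 0) :
    ∀ k : ℝ × ℝ, IsUnit (blochH tx ty t2 k) := by
  intro k
  set A1 : ℝ := tx * (1 - Real.cos k.1) - t2 * (Real.sin k.2 + Real.sin (k.1 + k.2)) with hA1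
  set B1 : ℝ := tx * Real.sin k.1 + t2 * (Real.cos k.2 - Real.cos (k.1 + k.2)) with hB1
  set A2 : ℝ := tx * (1 - Real.cos k.1) + t2 * (Real.sin k.2 + Real.sin (k.1 + k.2)) with hA2
  set B2 : ℝ := tx * Real.sin k.1 - t2 * (Real.cos k.2 - Real.cos (k.1 + k.2)) with hB2
  set C : ℝ := 2 * ty * Real.cos k.2 with hC
  rw [Matrix.isUnit_iff_isUnit_det, ← Matrix.det_submatrix_equiv_self prodEquiv,
    blochH_submatrix tx ty t2 k A1 B1 A2 B2 C hA1 hB1 hA2 hB2 hC]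
  have hfb : (!![(C : ℂ), (A1 : ℂ) - Complex.I * (B1 : ℂ), 0, 0;
       (A1 : ℂ) + Complex.I * (B1 : ℂ), -(C : ℂ), 0, 0;
       0, 0, (C : ℂ), (A2 : ℂ) - Complex.I * (B2 : ℂ);
       0, 0, (A2 : ℂ) + Complex.I * (B2 : ℂ), -(C : ℂ)]) =
      Matrix.reindex (finSumFinEquiv (m := 2) (n := 2)) (finSumFinEquiv (m := 2) (n := 2))
        (Matrix.fromBlocks
          !![(C : ℂ), (A1 : ℂ) - Complex.I * (B1 : ℂ); (A1 : ℂ) + Complex.I * (B1 : ℂ), -(C : ℂ)]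
          0 0
          !![(C : ℂ), (A2 : ℂ) - Complex.I * (B2 : ℂ); (A2 : ℂ) + Complex.I * (B2 : ℂ), -(C : ℂ)]) := by
    ext i j
    fin_cases i <;> fin_cases j <;> rfl
  rw [hfb, Matrix.det_reindex_self, Matrix.det_fromBlocks_zero₁₂, det_block, det_block,
    isUnit_iff_ne_zero]
  have h1 : A1 ^ 2 + B1 ^ 2 + C ^ 2 ≠ 0 := by
    have := key tx ty t2 1 (Real.cos k.1) (Real.sin k.1) (Real.cos k.2) (Real.sin k.2)
      (Real.cos (k.1 + k.2)) (Real.sin (k.1 + k.2)) htx hty ht2 (by norm_num)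
      (Real.cos_sq_add_sin_sq k.1) (Real.cos_sq_add_sin_sq k.2)
      (Real.cos_add k.1 k.2) (Real.sin_add k.1 k.2)
    intro hh
    exact this (by rw [hA1, hB1, hC] at hh; linear_combination hh)
  have h2 : A2 ^ 2 + B2 ^ 2 + C ^ 2 ≠ 0 := by
    have := key tx ty t2 (-1) (Real.cos k.1) (Real.sin k.1) (Real.cos k.2) (Real.sin k.2)
      (Real.cos (k.1 + k.2)) (Real.sin (k.1 + k.2)) htx hty ht2 (by norm_num)
      (Real.cos_sq_add_sin_sq k.1) (Real.cos_sq_add_sin_sq k.2)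
      (Real.cos_add k.1 k.2) (Real.sin_add k.1 k.2)
    intro hh
    exact this (by rw [hA2, hB2, hC] at hh; linear_combination hh)
  have e1 : -((C : ℂ) ^ 2 + (A1 : ℂ) ^ 2 + (B1 : ℂ) ^ 2) ≠ 0 := by
    simp only [neg_ne_zero]
    intro hh
    apply h1
    have : ((A1 ^ 2 + B1 ^ 2 + C ^ 2 : ℝ) : ℂ) = 0 := by push_cast; linear_combination hh
    exact_mod_cast this
  have e2 : -((C : ℂ) ^ 2 + (A2 : ℂ) ^ 2 + (B2 : ℂ) ^ 2) ≠ 0 := by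
    simp only [neg_ne_zero]
    intro hh
    apply h2
    have : ((A2 ^ 2 + B2 ^ 2 + C ^ 2 : ℝ) : ℂ) = 0 := by push_cast; linear_combination hh
    exact_mod_cast this
  exact mul_ne_zero e1 e2
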